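/- Let q = p^n with p prime, let G = PSL(2, F_q), and let p' be a prime divisor of |G| with p' ≠ p and p' ≠ 2. Then every subgroup of G whose order is a power of p' (in particular, every cyclic subgroup of order p'^i for 1 ≤ i ≤ v_{p'}(|G|)) is pronormal in G. -/

import Mathlib

/-!
In a finite group whose Sylow `r`-subgroups are cyclic, every `r`-subgroup `H` is pronormal:
inside `K = ⟨H, H^g⟩`, Sylow's theorem provides `k ∈ K` such that `H` and `(H^g)^k` lie in one
Sylow subgroup, and a cyclic group has only one subgroup of each order, so `(H^g)^k = H`.

In `PSL(2, q)` with `q = p^n`, an odd prime `r ≠ p` divides exactly one of `q - 1` and `q + 1`,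
and accordingly the image of the split torus `{diag(a, a⁻¹)}`, or of the norm-one elements of
`𝔽_{q²}` acting on `𝔽_{q²} ≅ 𝔽_q²` by multiplication, is a cyclic subgroup of index prime to `r`.
It contains a Sylow `r`-subgroup, so all of them are cyclic.
-/

/-- The conjugate `H^g := g⁻¹ H g` of a subgroup `H` by an element `g`. -/
def Subgroup.conjugate {G : Type*} [Group G] (H : Subgroup G) (g : G) : Subgroup G :=
  H.map (MulAut.conj g⁻¹).toMonoidHom

/-- A subgroup `H` of a group `G` is pronormal in `G` if for every `g ∈ G` there exists
`x ∈ ⟨H, H^g⟩` such that `H^x = H^g`. -/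
def IsPronormal {G : Type*} [Group G] (H : Subgroup G) : Prop :=
  ∀ g : G, ∃ x ∈ (H ⊔ H.conjugate g : Subgroup G), H.conjugate x = H.conjugate g

theorem IsCyclic.subgroup_eq_of_card_eq {α : Type*} [Group α] [Finite α] [IsCyclic α]
    {H K : Subgroup α} (h : Nat.card H = Nat.card K) : H = K := by
  classical
  have := Fintype.ofFinite α
  have key : ∀ L : Subgroup α, Nat.card L = Nat.card H →
      (L : Set α) = {x | x ^ Nat.card H = 1} := by
    intro L hL
    refine Set.eq_of_subset_of_ncard_le (fun x hx ↦ ?_) ?_ (Set.toFinite _)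
    · rw [Set.mem_ofPred_eq, ← hL, ← orderOf_dvd_iff_pow_eq_one]
      exact L.orderOf_dvd_natCard hx
    · rw [← Nat.card_coe_set_eq (L : Set α), SetLike.coe_sort_coe, hL, Set.ncard_eq_toFinset_card']
      simpa using IsCyclic.card_pow_eq_one_le (α := α) (Nat.card_pos (α := H))
  exact SetLike.coe_injective ((key H rfl).trans (key K h.symm).symm)

namespace Subgroup

variable {G : Type*} [Group G]

theorem mem_conjugate {H : Subgroup G} {g x : G} : x ∈ H.conjugate g ↔ g * x * g⁻¹ ∈ H := by
  simp only [conjugate, mem_map, MulEquiv.coe_toMonoidHom, MulAut.conj_apply, inv_inv]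
  constructor
  · rintro ⟨h, hh, rfl⟩
    simpa [mul_assoc] using hh
  · exact fun hx ↦ ⟨g * x * g⁻¹, hx, by group⟩

theorem conjugate_conjugate (H : Subgroup G) (a b : G) :
    (H.conjugate a).conjugate b = H.conjugate (a * b) := by
  ext x
  simp only [mem_conjugate, mul_inv_rev, mul_assoc]

theorem card_conjugate (H : Subgroup G) (g : G) : Nat.card (H.conjugate g) = Nat.card H :=
  Nat.card_congr (H.equivMapOfInjective _ (MulAut.conj g⁻¹).injective).toEquiv.symm

theorem eq_of_le_of_card_eq_of_isCyclic {P H K : Subgroup G} [Finite P] [IsCyclic P]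
    (hH : H ≤ P) (hK : K ≤ P) (h : Nat.card H = Nat.card K) : H = K := by
  have hcard : Nat.card (H.subgroupOf P) = Nat.card (K.subgroupOf P) := by
    rwa [Nat.card_congr (subgroupOfEquivOfLe hH).toEquiv,
      Nat.card_congr (subgroupOfEquivOfLe hK).toEquiv]
  have := subgroupOf_inj.mp (IsCyclic.subgroup_eq_of_card_eq hcard)
  rwa [inf_eq_left.mpr hH, inf_eq_left.mpr hK] at this

end Subgroup

section Sylow

open Subgroup Pointwise

variable {G : Type*} [Group G] [Finite G] {r : ℕ} [Fact r.Prime]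

theorem IsPGroup.exists_conjugate_le_sylow {K A B : Subgroup G} (hA : IsPGroup r A)
    (hB : IsPGroup r B) (hAK : A ≤ K) (hBK : B ≤ K) :
    ∃ k ∈ K, ∃ P : Sylow r G, A ≤ P ∧ B.conjugate k ≤ P := by
  obtain ⟨S, hAS⟩ := (hA.comap_subtype (K := K)).exists_le_sylow
  obtain ⟨T, hBT⟩ := (hB.comap_subtype (K := K)).exists_le_sylow
  obtain ⟨c, hc⟩ := MulAction.exists_smul_eq K T S
  obtain ⟨P, hSP⟩ := (S.2.map K.subtype).exists_le_sylow
  refine ⟨(c : G)⁻¹, K.inv_mem c.2, P, fun a ha ↦ hSP ⟨⟨a, hAK ha⟩, hAS ha, rfl⟩, fun x hx ↦ ?_⟩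
  rw [mem_conjugate, inv_inv] at hx
  have hxT : (⟨_, hBK hx⟩ : K) ∈ T := hBT hx
  refine hSP ⟨c * ⟨_, hBK hx⟩ * c⁻¹, ?_, by simp [mul_assoc]⟩
  rw [← hc, Sylow.coe_subgroup_smul]
  exact Subgroup.smul_mem_pointwise_smul _ (MulAut.conj c) _ hxT

theorem IsPGroup.isPronormal (hSyl : ∀ P : Sylow r G, IsCyclic P) {H : Subgroup G}
    (hH : IsPGroup r H) : IsPronormal H := by
  intro g
  obtain ⟨k, hk, P, hHP, hHgP⟩ :=
    hH.exists_conjugate_le_sylow (hH.map _) le_sup_left le_sup_right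
  have := hSyl P
  have hH_eq : H = (H.conjugate g).conjugate k :=
    eq_of_le_of_card_eq_of_isCyclic hHP hHgP (by rw [card_conjugate, card_conjugate])
  refine ⟨k⁻¹, inv_mem hk, ?_⟩
  calc H.conjugate k⁻¹ = ((H.conjugate g).conjugate k).conjugate k⁻¹ := by rw [← hH_eq]
    _ = H.conjugate g := by rw [conjugate_conjugate, conjugate_conjugate, mul_inv_cancel, mul_one]

theorem Sylow.isCyclic_of_isCyclic_of_not_dvd_index {C : Subgroup G} [IsCyclic C]
    (hC : ¬ r ∣ C.index) (P : Sylow r G) : IsCyclic P := by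
  obtain ⟨Q⟩ : Nonempty (Sylow r C) := Sylow.nonempty
  have hQ : ¬ r ∣ (Q.map C.subtype).index := by
    rw [index_map_subtype]
    exact Nat.Prime.not_dvd_mul Fact.out Q.not_dvd_index hC
  let P' : Sylow r G := (Q.2.map C.subtype).toSylow hQ
  have : IsCyclic P' := (Q.1.equivMapOfInjective _ C.subtype_injective).isCyclic.mp inferInstance
  exact (Sylow.equiv P' P).isCyclic.mp this

end Sylow

theorem MonoidHom.index_range_dvd_of_forall_pow_eq_one {A G : Type*} [Group A] [Group G]
    [Finite A] [IsCyclic A] (f : A →* G) {d m : ℕ} (hker : ∀ a ∈ f.ker, a ^ d = 1)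
    (hG : Nat.card G ∣ Nat.card A * m) : f.range.index ∣ d * m := by
  have hker_dvd : Nat.card f.ker ∣ d := by
    rw [← IsCyclic.exponent_eq_card]
    exact Monoid.exponent_dvd_of_forall_pow_eq_one fun a ↦ Subtype.ext (hker a a.2)
  have hA : Nat.card A = Nat.card f.ker * Nat.card f.range := by
    rw [← f.ker.card_mul_index, Subgroup.index_ker]
  have : Finite f.range := Finite.of_surjective _ f.rangeRestrict_surjective
  have h : Nat.card f.range * f.range.index ∣ Nat.card f.range * (Nat.card f.ker * m) := by
    rwa [f.range.card_mul_index, ← mul_assoc, mul_comm (Nat.card f.range), ← hA]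
  exact (Nat.dvd_of_mul_dvd_mul_left Nat.card_pos h).trans (mul_dvd_mul_right hker_dvd m)

theorem MonoidHom.card_ker_mul_card_of_surjective {G G' : Type*} [Group G] [Group G']
    (f : G →* G') (hf : Function.Surjective f) : Nat.card f.ker * Nat.card G' = Nat.card G := by
  rw [← f.ker.card_mul_index, Subgroup.index_ker, f.range_eq_top.mpr hf, Subgroup.card_top]

namespace Matrix

variable {F : Type*} [Field F] [Fintype F]

theorem SpecialLinearGroup.card_mul_card_sub_one (ι : Type*) [Fintype ι] [DecidableEq ι]
    [Nonempty ι] :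
    Nat.card (SpecialLinearGroup ι F) * (Fintype.card F - 1) = Nat.card (GL ι F) := by
  have hrange : (SpecialLinearGroup.toGL : SpecialLinearGroup ι F →* GL ι F).range =
      GeneralLinearGroup.det.ker :=
    SetLike.coe_injective SpecialLinearGroup.range_toGL
  rw [Nat.card_congr (MonoidHom.ofInjective SpecialLinearGroup.toGL_injective).toEquiv, hrange,
    ← Nat.card_eq_fintype_card, ← Nat.card_units,
    GeneralLinearGroup.det.card_ker_mul_card_of_surjective GeneralLinearGroup.det_surjective]

theorem ProjectiveSpecialLinearGroup.card_dvd_mul_sub_one_mul_add_one :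
    Nat.card (ProjectiveSpecialLinearGroup (Fin 2) F) ∣
      Fintype.card F * (Fintype.card F - 1) * (Fintype.card F + 1) := by
  have hq : 1 < Fintype.card F := Fintype.one_lt_card
  have hSL : Nat.card (SpecialLinearGroup (Fin 2) F) =
      Fintype.card F * (Fintype.card F - 1) * (Fintype.card F + 1) := by
    refine Nat.eq_of_mul_eq_mul_right (Nat.sub_pos_of_lt hq) ?_
    rw [SpecialLinearGroup.card_mul_card_sub_one, card_GL_field, Fin.prod_univ_two]
    simp only [Fin.val_zero, Fin.val_one, pow_zero, pow_one]
    zify [hq.le, Nat.one_le_pow 2 _ (by omega : 0 < Fintype.card F),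
      Nat.le_self_pow two_ne_zero (Fintype.card F)]
    ring
  exact hSL ▸ Subgroup.card_quotient_dvd_card _

variable (R : Type*) [CommRing R]

noncomputable def SpecialLinearGroup.diagonalUnits :
    Rˣ →* SpecialLinearGroup (Fin 2) R where
  toFun a := ⟨diagonal ![(a : R), ↑a⁻¹], by simp⟩
  map_one' := by ext i j; fin_cases i <;> fin_cases j <;> simp
  map_mul' a b := Subtype.ext <| by
    change diagonal _ = diagonal _ * diagonal _
    rw [diagonal_mul_diagonal]
    congr 1
    ext i; fin_cases i <;> simp [mul_comm]

variable {R}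

theorem SpecialLinearGroup.coe_diagonalUnits (a : Rˣ) :
    (diagonalUnits R a : Matrix (Fin 2) (Fin 2) R) = diagonal ![(a : R), ↑a⁻¹] :=
  rfl

theorem SpecialLinearGroup.sq_eq_one_of_diagonalUnits_mem_center {a : Rˣ}
    (ha : diagonalUnits R a ∈ Subgroup.center (SpecialLinearGroup (Fin 2) R)) : a ^ 2 = 1 := by
  obtain ⟨s, hs, hsa⟩ := mem_center_iff.mp ha
  have : s = a := by simpa [coe_diagonalUnits] using congrFun₂ hsa 0 0
  ext
  simpa [← this] using hs

variable {S ι : Type*} [CommRing S] [Algebra R S] [Fintype ι] [DecidableEq ι]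

noncomputable def SpecialLinearGroup.ofNormOne (b : Module.Basis ι R S) :
    (Units.map (Algebra.norm R : S →* R)).ker →* SpecialLinearGroup ι R where
  toFun u := ⟨Algebra.leftMulMatrix b ((u : Sˣ) : S), by
    rw [← Algebra.norm_eq_matrix_det]
    exact Units.ext_iff.mp (MonoidHom.mem_ker.mp u.2)⟩
  map_one' := by ext1; simp
  map_mul' u v := Subtype.ext <| map_mul (Algebra.leftMulMatrix b) _ _

theorem SpecialLinearGroup.pow_card_eq_one_of_ofNormOne_mem_center (b : Module.Basis ι R S)
    {u : (Units.map (Algebra.norm R : S →* R)).ker}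
    (hu : ofNormOne b u ∈ Subgroup.center (SpecialLinearGroup ι R)) :
    u ^ Fintype.card ι = 1 := by
  obtain ⟨s, hs, hsu⟩ := mem_center_iff.mp hu
  have : algebraMap R S s = ((u : Sˣ) : S) :=
    Algebra.leftMulMatrix_injective b ((Algebra.leftMulMatrix b).commutes s ▸ hsu)
  ext
  simp [← this, ← map_pow, hs]

end Matrix

namespace Matrix.ProjectiveSpecialLinearGroup

open Matrix.SpecialLinearGroup

variable (F : Type*) [Field F] [Fintype F]

theorem exists_isCyclic_index_dvd_two_mul_card_mul_add_one :
    ∃ C : Subgroup (ProjectiveSpecialLinearGroup (Fin 2) F), IsCyclic C ∧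
      C.index ∣ 2 * (Fintype.card F * (Fintype.card F + 1)) := by
  let f := (QuotientGroup.mk' (Subgroup.center (SpecialLinearGroup (Fin 2) F))).comp
    (diagonalUnits F)
  refine ⟨f.range, isCyclic_of_surjective _ f.rangeRestrict_surjective,
    f.index_range_dvd_of_forall_pow_eq_one (fun a ha ↦ ?_) ?_⟩
  · exact sq_eq_one_of_diagonalUnits_mem_center ((QuotientGroup.eq_one_iff _).mp ha)
  · rw [Nat.card_units, Nat.card_eq_fintype_card (α := F)]
    exact card_dvd_mul_sub_one_mul_add_one.trans (dvd_of_eq (by ring))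

theorem exists_isCyclic_index_dvd_two_mul_card_mul_sub_one :
    ∃ C : Subgroup (ProjectiveSpecialLinearGroup (Fin 2) F), IsCyclic C ∧
      C.index ∣ 2 * (Fintype.card F * (Fintype.card F - 1)) := by
  have : Fact (ringChar F).Prime := ⟨CharP.char_is_prime F _⟩
  let K := FiniteField.Extension F (ringChar F) 2
  let b : Module.Basis (Fin 2) F K :=
    Module.finBasisOfFinrankEq F K (FiniteField.finrank_extension ..)
  let f := (QuotientGroup.mk' (Subgroup.center (SpecialLinearGroup (Fin 2) F))).comp (ofNormOne b)
  have hA : Nat.card (Units.map (Algebra.norm F : K →* F)).ker = Fintype.card F + 1 := by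
    have hq : 1 < Nat.card F := Finite.one_lt_card
    rw [← Nat.card_eq_fintype_card]
    refine Nat.eq_of_mul_eq_mul_right (Nat.sub_pos_of_lt hq) ?_
    rw [← Nat.card_units, MonoidHom.card_ker_mul_card_of_surjective _
      (FiniteField.unitsMap_norm_surjective F K), Nat.card_units, Nat.card_units,
      FiniteField.natCard_extension]
    zify [hq.le, Nat.one_le_pow 2 _ (by omega : 0 < Nat.card F)]
    ring
  refine ⟨f.range, isCyclic_of_surjective _ f.rangeRestrict_surjective,
    f.index_range_dvd_of_forall_pow_eq_one (fun u hu ↦ ?_) ?_⟩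
  · exact pow_card_eq_one_of_ofNormOne_mem_center b ((QuotientGroup.eq_one_iff _).mp hu)
  · rw [hA]
    exact card_dvd_mul_sub_one_mul_add_one.trans (dvd_of_eq (by ring))

end Matrix.ProjectiveSpecialLinearGroup

theorem stmt9_general (p n p' : ℕ) (hp : p.Prime) (hp' : p'.Prime)
    (F : Type*) [Field F] [Fintype F] (hF : Fintype.card F = p ^ n)
    (hne : p' ≠ p) (hne2 : p' ≠ 2)
    (H : Subgroup (Matrix.ProjectiveSpecialLinearGroup (Fin 2) F))
    (hH : ∃ i : ℕ, Nat.card H = p' ^ i) :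
    IsPronormal H := by
  have : Fact p'.Prime := ⟨hp'⟩
  have h2 : ¬ p' ∣ 2 := fun h ↦ hne2 ((Nat.prime_dvd_prime_iff_eq hp' Nat.prime_two).mp h)
  have hq : ¬ p' ∣ Fintype.card F := fun h ↦
    hne ((Nat.prime_dvd_prime_iff_eq hp' hp).mp (hp'.dvd_of_dvd_pow (hF ▸ h)))
  obtain ⟨C, hC, hindex⟩ : ∃ C : Subgroup (Matrix.ProjectiveSpecialLinearGroup (Fin 2) F),
      IsCyclic C ∧ ¬ p' ∣ C.index := by
    by_cases hsplit : p' ∣ Fintype.card F - 1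
    · obtain ⟨C, hC, hdvd⟩ :=
        Matrix.ProjectiveSpecialLinearGroup.exists_isCyclic_index_dvd_two_mul_card_mul_add_one F
      have hq1 : ¬ p' ∣ Fintype.card F + 1 := fun h ↦ h2 <| by
        have := Nat.dvd_sub h hsplit
        rwa [Nat.add_sub_sub_cancel Fintype.card_pos] at this
      exact ⟨C, hC, fun h ↦ hp'.not_dvd_mul h2 (hp'.not_dvd_mul hq hq1) (h.trans hdvd)⟩
    · obtain ⟨C, hC, hdvd⟩ :=
        Matrix.ProjectiveSpecialLinearGroup.exists_isCyclic_index_dvd_two_mul_card_mul_sub_one F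
      exact ⟨C, hC, fun h ↦ hp'.not_dvd_mul h2 (hp'.not_dvd_mul hq hsplit) (h.trans hdvd)⟩
  obtain ⟨i, hi⟩ := hH
  exact (IsPGroup.of_card hi).isPronormal (Sylow.isCyclic_of_isCyclic_of_not_dvd_index hindex)

theorem stmt9 (p n p' : ℕ) (hp : p.Prime) (hp' : p'.Prime)
    (F : Type*) [Field F] [Fintype F] (hF : Fintype.card F = p ^ n)
    (hdvd : p' ∣ Nat.card (Matrix.ProjectiveSpecialLinearGroup (Fin 2) F))
    (hne : p' ≠ p) (hne2 : p' ≠ 2)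
    (H : Subgroup (Matrix.ProjectiveSpecialLinearGroup (Fin 2) F))
    (hH : ∃ i : ℕ, Nat.card H = p' ^ i) :
    IsPronormal H :=
  stmt9_general p n p' hp hp' F hF hne hne2 H hH
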